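/- arXiv:1904.12567 — 2 statements merged into one kernel-verified Lean document; each statement's English description precedes it below -/
import Mathlib

section
/- The distance on the glued space X_Γ is given explicitly by: for x,y ∈ Y = S×[0,l], d([x],[y]) = min over p,q ∈ S of min{d_Y(x,y), d_Y(x,(p,0)) + d_X(γ(p),γ(q)) + d_Y((q,0),y)}; for x ∈ X, y ∈ Y, d([x],[y]) = min over p ∈ S of d_X(x,γ(p)) + d_Y((p,0),y); and for x,y ∈ X, d([x],[y]) = d_X(x,y). -/
open scoped ENNReal
open MeasureTheory Set

noncomputable section

/-- Points of the disjoint union `X ⊔ (S × [0,l])` used to build the glued space `X_Γ`,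
where `S` is the circle of circumference `l` (with its quotient / arc metric). -/
abbrev GluePts (X : Type*) (l : ℝ) := X ⊕ (AddCircle l × Set.Icc (0:ℝ) l)

/-- The Euclidean product distance on the cylinder `S × [0,l]`. -/
def cylDist {l : ℝ} (a b : AddCircle l × Set.Icc (0:ℝ) l) : ℝ :=
  Real.sqrt (dist a.1 b.1 ^ 2 + dist a.2 b.2 ^ 2)

/-- Same, `ℝ≥0∞`-valued. -/
def eCylDist {l : ℝ} (a b : AddCircle l × Set.Icc (0:ℝ) l) : ℝ≥0∞ :=
  ENNReal.ofReal (cylDist a b)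

open Classical in
/-- Cost of a single step of a chain in the disjoint union: within one of the two pieces
one pays its distance; jumping between the pieces is free exactly at identified pairs
`γ(p) ∼ (p,0)` and costs `∞` otherwise. -/
def glueStep {X : Type*} [MetricSpace X] {l : ℝ} (γ : AddCircle l → X) :
    GluePts X l → GluePts X l → ℝ≥0∞
  | Sum.inl x, Sum.inl y => edist x y
  | Sum.inr a, Sum.inr b => eCylDist a b
  | Sum.inl x, Sum.inr b => if x = γ b.1 ∧ (b.2 : ℝ) = 0 then 0 else ∞
  | Sum.inr a, Sum.inl y => if y = γ a.1 ∧ (a.2 : ℝ) = 0 then 0 else ∞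

/-- Total cost of a chain (a list of points of the disjoint union). -/
def chainCost {X : Type*} [MetricSpace X] {l : ℝ} (γ : AddCircle l → X) :
    List (GluePts X l) → ℝ≥0∞
  | [] => 0
  | [_] => 0
  | a :: b :: t => glueStep γ a b + chainCost γ (b :: t)

/-- The quotient (pseudo-)distance of the metric gluing `X_Γ = (X ⊔ S×[0,l]) / (γ(p) ∼ (p,0))`:
the infimum of total costs of finite chains joining the two points. -/
def quotDist {X : Type*} [MetricSpace X] {l : ℝ} (γ : AddCircle l → X)
    (x y : GluePts X l) : ℝ≥0∞ :=
  ⨅ (c : List (GluePts X l)) (_ : c.head? = some x ∧ c.getLast? = some y), chainCost γ c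

/-- `γ : S → X` (with `S` the circle of circumference `l`) is a unit speed curve:
the length of the restriction of (the periodic lift of) `γ` to any interval `[a,b]`
equals `b - a`. This expresses that `γ` is the constant speed parametrization of a
closed rectifiable curve of length `l`. -/
def IsUnitSpeed {X : Type*} [MetricSpace X] {l : ℝ} (γ : AddCircle l → X) : Prop :=
  ∀ a b : ℝ, a ≤ b → eVariationOn (fun t : ℝ => γ t) (Set.Icc a b) = ENNReal.ofReal (b - a)

/-- The canonical retraction `P_Γ : X_Γ → X`: identity on `X` and `(p,t) ↦ γ(p)` on the collar. -/
def glueProj {X : Type*} [MetricSpace X] {l : ℝ} (γ : AddCircle l → X) :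
    GluePts X l → X
  | Sum.inl x => x
  | Sum.inr a => γ a.1

end

/-! The formula `D = glueFormula` bounds the quotient distance from above, since each of its
terms is the cost of an explicit chain crossing between `X` and `Y` only at identified pairs
`γ p ∼ (p, 0)`. Conversely, `D (·, y)` drops by at most the cost of any chain step: inside `X`
or `Y` this is the triangle inequality, and across an identified pair `D` does not change at
all, because `γ` is 1-Lipschitz, i.e. `d_X(γ p, γ q) ≤ d_S(p, q) = d_Y((p, 0), (q, 0))`.
Summing along a chain gives `D ≤ chainCost`. -/

variable {l : ℝ}

lemma cylDist_eq_dist_toLp (a b : AddCircle l × Set.Icc (0:ℝ) l) :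
    cylDist a b = dist (WithLp.toLp 2 a) (WithLp.toLp 2 b) := by
  rw [cylDist, WithLp.prod_dist_eq_add (by norm_num)]
  norm_num [Real.sqrt_eq_rpow]

lemma eCylDist_eq_edist_toLp (a b : AddCircle l × Set.Icc (0:ℝ) l) :
    eCylDist a b = edist (WithLp.toLp 2 a) (WithLp.toLp 2 b) := by
  rw [eCylDist, cylDist_eq_dist_toLp, edist_dist]

lemma eCylDist_self (a : AddCircle l × Set.Icc (0:ℝ) l) : eCylDist a a = 0 := by
  rw [eCylDist_eq_edist_toLp, edist_self]

lemma eCylDist_triangle (a b c : AddCircle l × Set.Icc (0:ℝ) l) :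
    eCylDist a c ≤ eCylDist a b + eCylDist b c := by
  simp only [eCylDist_eq_edist_toLp]
  exact edist_triangle _ _ _

lemma eCylDist_mk_mk_of_snd_eq (p q : AddCircle l) (t : Set.Icc (0:ℝ) l) :
    eCylDist (p, t) (q, t) = edist p q := by
  simp [eCylDist, cylDist, edist_dist]

lemma iInf_le_add_iInf {ι : Sort*} {f g : ι → ℝ≥0∞} {a : ℝ≥0∞} (h : ∀ i, f i ≤ a + g i) :
    ⨅ i, f i ≤ a + ⨅ i, g i := by
  rw [ENNReal.add_iInf]
  exact iInf_mono h

lemma LipschitzWith.edist_apply_le_edist_add {α β : Type*} [PseudoEMetricSpace α]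
    [PseudoEMetricSpace β] {f : α → β} (hf : LipschitzWith 1 f) (a b : α) (y : β) :
    edist (f a) y ≤ edist a b + edist (f b) y :=
  calc edist (f a) y ≤ edist (f a) (f b) + edist (f b) y := edist_triangle _ _ _
    _ ≤ edist a b + edist (f b) y := by
      gcongr
      simpa using hf.edist_le_mul a b

section Glue

variable {X : Type*} [MetricSpace X] (hl : 0 ≤ l) (γ : AddCircle l → X)

def cylBase (p : AddCircle l) : AddCircle l × Set.Icc (0:ℝ) l := (p, ⟨0, le_rfl, hl⟩)

lemma eCylDist_cylBase (p q : AddCircle l) : eCylDist (cylBase hl p) (cylBase hl q) = edist p q :=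
  eCylDist_mk_mk_of_snd_eq p q _

noncomputable def glueFormula : GluePts X l → GluePts X l → ℝ≥0∞
  | .inl x, .inl y => edist x y
  | .inl x, .inr b => ⨅ p, edist x (γ p) + eCylDist (cylBase hl p) b
  | .inr a, .inl y => ⨅ p, eCylDist a (cylBase hl p) + edist (γ p) y
  | .inr a, .inr b => min (eCylDist a b)
      (⨅ (p) (q), eCylDist a (cylBase hl p) + edist (γ p) (γ q) + eCylDist (cylBase hl q) b)

lemma glueFormula_self (a : GluePts X l) : glueFormula hl γ a a = 0 := by
  cases a with
  | inl x => exact edist_self x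
  | inr a => exact nonpos_iff_eq_zero.mp ((min_le_left _ _).trans_eq (eCylDist_self a))

lemma glueFormula_inl_le (x y : X) (c : GluePts X l) :
    glueFormula hl γ (.inl x) c ≤ edist x y + glueFormula hl γ (.inl y) c := by
  cases c with
  | inl z => exact edist_triangle x y z
  | inr b =>
    refine iInf_le_add_iInf fun p => ?_
    rw [← add_assoc]
    gcongr
    exact edist_triangle _ _ _

lemma glueFormula_inr_le (a b : AddCircle l × Set.Icc (0:ℝ) l) (c : GluePts X l) :
    glueFormula hl γ (.inr a) c ≤ eCylDist a b + glueFormula hl γ (.inr b) c := by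
  cases c with
  | inl z =>
    refine iInf_le_add_iInf fun p => ?_
    rw [← add_assoc]
    gcongr
    exact eCylDist_triangle _ _ _
  | inr z =>
    rw [glueFormula, glueFormula, ← min_add_add_left]
    refine min_le_min (eCylDist_triangle _ _ _)
      (iInf_le_add_iInf fun p => iInf_le_add_iInf fun q => ?_)
    rw [← add_assoc, ← add_assoc]
    gcongr
    exact eCylDist_triangle _ _ _

variable {γ}

lemma glueFormula_inl_eq_inr_cylBase (hγ : LipschitzWith 1 γ) (p : AddCircle l)
    (c : GluePts X l) :
    glueFormula hl γ (.inl (γ p)) c = glueFormula hl γ (.inr (cylBase hl p)) c := by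
  cases c with
  | inl z =>
    simp only [glueFormula, eCylDist_cylBase]
    refine le_antisymm (le_iInf fun q => hγ.edist_apply_le_edist_add p q z)
      (iInf_le_of_le p (by simp))
  | inr z =>
    simp only [glueFormula, eCylDist_cylBase]
    refine le_antisymm (le_min (iInf_le_of_le p (by simp)) (le_iInf₂ fun q r => iInf_le_of_le r ?_))
      (le_iInf fun q => (min_le_right _ _).trans (iInf₂_le_of_le p q (by simp)))
    gcongr
    exact hγ.edist_apply_le_edist_add p q _

lemma glueFormula_le_glueStep_add (hγ : LipschitzWith 1 γ) (a b c : GluePts X l) :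
    glueFormula hl γ a c ≤ glueStep γ a b + glueFormula hl γ b c := by
  rcases a with x | ⟨p, t⟩ <;> rcases b with y | ⟨q, s⟩
  · exact glueFormula_inl_le hl γ x y c
  · by_cases h : x = γ q ∧ (s : ℝ) = 0
    · obtain ⟨rfl, hs⟩ := h
      obtain rfl : s = ⟨0, le_rfl, hl⟩ := Subtype.ext hs
      exact (glueFormula_inl_eq_inr_cylBase hl hγ q c).le.trans le_add_self
    · simp [glueStep, h]
  · by_cases h : y = γ p ∧ (t : ℝ) = 0
    · obtain ⟨rfl, ht⟩ := h
      obtain rfl : t = ⟨0, le_rfl, hl⟩ := Subtype.ext ht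
      exact (glueFormula_inl_eq_inr_cylBase hl hγ p c).ge.trans le_add_self
    · simp [glueStep, h]
  · exact glueFormula_inr_le hl γ _ _ c

lemma glueFormula_le_chainCost (hγ : LipschitzWith 1 γ) :
    ∀ (c : List (GluePts X l)) {x y : GluePts X l},
      c.head? = some x → c.getLast? = some y → glueFormula hl γ x y ≤ chainCost γ c
  | [], _, _, hx, _ => by simp at hx
  | [a], x, y, hx, hy => by
    obtain rfl : a = x := by simpa using hx
    obtain rfl : a = y := by simpa using hy
    simp [glueFormula_self]
  | a :: b :: t, x, y, hx, hy => by
    obtain rfl : a = x := by simpa using hx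
    calc glueFormula hl γ a y ≤ glueStep γ a b + glueFormula hl γ b y :=
          glueFormula_le_glueStep_add hl hγ a b y
      _ ≤ glueStep γ a b + chainCost γ (b :: t) := by
          gcongr
          exact glueFormula_le_chainCost hγ (b :: t) rfl (by simpa using hy)

variable (γ) in
lemma quotDist_le_chainCost (c : List (GluePts X l)) {x y : GluePts X l}
    (hx : c.head? = some x) (hy : c.getLast? = some y) : quotDist γ x y ≤ chainCost γ c :=
  iInf₂_le c ⟨hx, hy⟩

variable (γ) in
lemma quotDist_le_glueFormula (x y : GluePts X l) : quotDist γ x y ≤ glueFormula hl γ x y := by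
  rcases x with x | a <;> rcases y with y | b
  · simpa [chainCost, glueStep, glueFormula] using quotDist_le_chainCost γ [.inl x, .inl y] rfl rfl
  · refine le_iInf fun p => ?_
    simpa [chainCost, glueStep, cylBase] using
      quotDist_le_chainCost γ [.inl x, .inl (γ p), .inr (cylBase hl p), .inr b] rfl rfl
  · refine le_iInf fun p => ?_
    simpa [chainCost, glueStep, cylBase] using
      quotDist_le_chainCost γ [.inr a, .inr (cylBase hl p), .inl (γ p), .inl y] rfl rfl
  · refine le_min ?_ (le_iInf₂ fun p q => ?_)
    · simpa [chainCost, glueStep] using quotDist_le_chainCost γ [.inr a, .inr b] rfl rfl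
    · simpa [chainCost, glueStep, cylBase, add_assoc] using
        quotDist_le_chainCost γ [.inr a, .inr (cylBase hl p), .inl (γ p), .inl (γ q),
          .inr (cylBase hl q), .inr b] rfl rfl

lemma quotDist_eq_glueFormula (hγ : LipschitzWith 1 γ) (x y : GluePts X l) :
    quotDist γ x y = glueFormula hl γ x y :=
  le_antisymm (quotDist_le_glueFormula hl γ x y)
    (le_iInf₂ fun c hc => glueFormula_le_chainCost hl hγ c hc.1 hc.2)

end Glue

theorem quotDist_eq_glue_formula_general
    (X : Type*) [MetricSpace X] (l : ℝ) (hl : 0 < l)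
    (γ : AddCircle l → X) (hγLip : LipschitzWith 1 γ) :
    (∀ x y : AddCircle l × Set.Icc (0:ℝ) l,
        quotDist γ (Sum.inr x) (Sum.inr y) =
          min (eCylDist x y)
            (⨅ (p : AddCircle l) (q : AddCircle l),
              eCylDist x (p, ⟨0, ⟨le_rfl, hl.le⟩⟩) + edist (γ p) (γ q) +
                eCylDist (q, ⟨0, ⟨le_rfl, hl.le⟩⟩) y)) ∧
    (∀ (x : X) (y : AddCircle l × Set.Icc (0:ℝ) l),
        quotDist γ (Sum.inl x) (Sum.inr y) =
          ⨅ p : AddCircle l, edist x (γ p) + eCylDist (p, ⟨0, ⟨le_rfl, hl.le⟩⟩) y) ∧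
    (∀ x y : X, quotDist γ (Sum.inl x) (Sum.inl y) = edist x y) :=
  ⟨fun _ _ => quotDist_eq_glueFormula hl.le hγLip _ _,
    fun _ _ => quotDist_eq_glueFormula hl.le hγLip _ _,
    fun _ _ => quotDist_eq_glueFormula hl.le hγLip _ _⟩

/-- The quotient distance of the glued space `X_Γ` is given by the
explicit formula: for `x,y` in the cylinder `Y = S×[0,l]` it is the minimum of the
cylinder distance and of the infimum over `p,q ∈ S` of
`d_Y(x,(p,0)) + d_X(γ(p),γ(q)) + d_Y((q,0),y)`; for `x ∈ X`, `y ∈ Y` it is the infimum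
over `p ∈ S` of `d_X(x,γ(p)) + d_Y((p,0),y)`; and on `X × X` it is the distance of `X`. -/
theorem quotDist_eq_glue_formula
    (X : Type*) [MetricSpace X] [CompleteSpace X] (l : ℝ) (hl : 0 < l)
    (γ : AddCircle l → X) (hγLip : LipschitzWith 1 γ) (hγspeed : IsUnitSpeed γ) :
    (∀ x y : AddCircle l × Set.Icc (0:ℝ) l,
        quotDist γ (Sum.inr x) (Sum.inr y) =
          min (eCylDist x y)
            (⨅ (p : AddCircle l) (q : AddCircle l),
              eCylDist x (p, ⟨0, ⟨le_rfl, hl.le⟩⟩) + edist (γ p) (γ q) +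
                eCylDist (q, ⟨0, ⟨le_rfl, hl.le⟩⟩) y)) ∧
    (∀ (x : X) (y : AddCircle l × Set.Icc (0:ℝ) l),
        quotDist γ (Sum.inl x) (Sum.inr y) =
          ⨅ p : AddCircle l, edist x (γ p) + eCylDist (p, ⟨0, ⟨le_rfl, hl.le⟩⟩) y) ∧
    (∀ x y : X, quotDist γ (Sum.inl x) (Sum.inl y) = edist x y) :=
  quotDist_eq_glue_formula_general X l hl γ hγLip
end

section
/- The curve Γ_l in X_Γ corresponding to the top circle S × {l} is a Jordan curve of length l satisfying a 1-chord-arc condition: its constant speed parametrization γ_l satisfies (l/2π)·d_{S¹}(p,q) ≤ d(γ_l(p), γ_l(q)) for all p,q ∈ S¹. -/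
open scoped ENNReal
open MeasureTheory Set

/-- Length of the curve `t ↦ g t`, `t ∈ [a,b]`, with respect to an `ℝ≥0∞`-valued
distance function `d`: the supremum over all partitions of `[a,b]` of the sums of
consecutive distances. -/
noncomputable def curveELength {α : Type*} (d : α → α → ℝ≥0∞) (g : ℝ → α) (a b : ℝ) : ℝ≥0∞ :=
  ⨆ (n : ℕ) (ts : Fin (n + 1) → ℝ)
    (_ : Monotone ts ∧ (∀ i, ts i ∈ Set.Icc a b)),
      ∑ i : Fin n, d (g (ts i.castSucc)) (g (ts i.succ))

/-!
A function `u` on `X ⊔ (S × [0,l])` with `|u a - u b|` at most the cost of every chain step is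
1-Lipschitz for the gluing distance. Taking `u = 0` on `X` and `u (p, t) = min t (d_S(p, q))`,
which vanishes on the glued bottom circle, shows that two points at a common height
`t ≥ d_S(p, q)` are at gluing distance exactly `d_S(p, q)`: the gluing creates no shortcut.
On the top circle `t = l` always qualifies, so `γ_l` is an isometric embedding of `S¹` rescaled
by `l / 2π`, and injectivity, the chord-arc inequality and the length `l` all follow.
-/

namespace AddCircle

theorem dist_coe_mul {p c : ℝ} (hc : 0 ≤ c) (x y : ℝ) :
    dist ((x * c : ℝ) : AddCircle (p * c)) ((y * c : ℝ) : AddCircle (p * c)) =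
      c * dist (x : AddCircle p) (y : AddCircle p) := by
  have h := norm_coe_mul p (x - y) c
  rw [mul_comm c p, mul_comm c (x - y), abs_of_nonneg hc] at h
  rw [dist_eq_norm, ← coe_sub, ← sub_mul, h, dist_eq_norm, coe_sub]

theorem dist_coe_le_abs_sub (p x y : ℝ) :
    dist (x : AddCircle p) (y : AddCircle p) ≤ |x - y| := by
  rw [dist_eq_norm, ← coe_sub]
  simpa using QuotientAddGroup.norm_mk_le_norm (S := AddSubgroup.zmultiples p) (m := x - y)

theorem dist_coe_eq_abs_sub {p x y : ℝ} (hp : 0 < p) (h : |x - y| ≤ p / 2) :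
    dist (x : AddCircle p) (y : AddCircle p) = |x - y| := by
  rw [dist_eq_norm, ← coe_sub, norm_coe_eq_abs_iff (p := p) hp.ne', abs_of_pos hp]
  exact h

end AddCircle

theorem Fin.sum_univ_succ_sub_castSucc {n : ℕ} (f : Fin (n + 1) → ℝ) :
    ∑ i : Fin n, (f i.succ - f i.castSucc) = f (Fin.last n) - f 0 := by
  induction n with
  | zero => simp
  | succ n ih =>
    have h := ih (f ∘ Fin.castSucc)
    simp only [Function.comp_apply, ← Fin.succ_castSucc, Fin.castSucc_zero] at h
    rw [Fin.sum_univ_castSucc, h, Fin.succ_last]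
    ring

section CurveLength

variable {α : Type*} {d : α → α → ℝ≥0∞} {g : ℝ → α}

theorem curveELength_le_of_le_mul_sub {a b c : ℝ} (hc : 0 ≤ c)
    (hg : ∀ s t, s ≤ t → d (g s) (g t) ≤ ENNReal.ofReal (c * (t - s))) :
    curveELength d g a b ≤ ENNReal.ofReal (c * (b - a)) := by
  refine iSup_le fun n => iSup_le fun ts => iSup_le fun ⟨hmono, hmem⟩ => ?_
  have hstep (i : Fin n) : 0 ≤ c * (ts i.succ - ts i.castSucc) :=
    mul_nonneg hc (sub_nonneg.2 (hmono i.castSucc_le_succ))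
  calc ∑ i : Fin n, d (g (ts i.castSucc)) (g (ts i.succ))
      ≤ ∑ i : Fin n, ENNReal.ofReal (c * (ts i.succ - ts i.castSucc)) :=
        Finset.sum_le_sum fun i _ => hg _ _ (hmono i.castSucc_le_succ)
    _ = ENNReal.ofReal (c * (ts (Fin.last n) - ts 0)) := by
        rw [← ENNReal.ofReal_sum_of_nonneg fun i _ => hstep i, ← Finset.mul_sum,
          Fin.sum_univ_succ_sub_castSucc]
    _ ≤ ENNReal.ofReal (c * (b - a)) := by
        gcongr
        · exact (hmem _).2
        · exact (hmem _).1

theorem sum_le_curveELength {a b : ℝ} {n : ℕ} {ts : Fin (n + 1) → ℝ} (hmono : Monotone ts)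
    (hmem : ∀ i, ts i ∈ Set.Icc a b) :
    ∑ i : Fin n, d (g (ts i.castSucc)) (g (ts i.succ)) ≤ curveELength d g a b :=
  le_iSup_of_le n <| le_iSup_of_le ts <| le_iSup_of_le ⟨hmono, hmem⟩ le_rfl

theorem curveELength_eq_of_eq_dist_addCircle {p c : ℝ} (hp : 0 < p) (hc : 0 ≤ c)
    (hg : ∀ s t, d (g s) (g t) = ENNReal.ofReal (c * dist (s : AddCircle p) (t : AddCircle p))) :
    curveELength d g 0 p = ENNReal.ofReal (c * p) := by
  refine le_antisymm ?_ ?_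
  · simpa using curveELength_le_of_le_mul_sub (a := 0) (b := p) hc fun s t hst => by
      rw [hg, ← abs_of_nonneg (sub_nonneg.2 hst), abs_sub_comm]
      gcongr
      exact AddCircle.dist_coe_le_abs_sub p s t
  · have hmono : Monotone (![0, p / 2, p] : Fin 3 → ℝ) :=
      Fin.monotone_iff_le_succ.2 fun i => by fin_cases i <;> simp <;> linarith
    have hmem : ∀ i, (![0, p / 2, p] : Fin 3 → ℝ) i ∈ Set.Icc 0 p := fun i => by
      refine ⟨?_, ?_⟩ <;> fin_cases i <;> simp <;> linarith
    have hhalf : |p / 2| = p / 2 := abs_of_pos (half_pos hp)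
    have h₁ : |0 - p / 2| = p / 2 := by rw [zero_sub, abs_neg, hhalf]
    have h₂ : |p / 2 - p| = p / 2 := by rw [abs_sub_comm, sub_half, hhalf]
    refine le_trans (le_of_eq ?_) (sum_le_curveELength hmono hmem)
    have hstep : ENNReal.ofReal (c * (p / 2)) = d (g 0) (g (p / 2)) := by
      rw [hg, AddCircle.dist_coe_eq_abs_sub hp h₁.le, h₁]
    have hstep' : ENNReal.ofReal (c * (p / 2)) = d (g (p / 2)) (g p) := by
      rw [hg, AddCircle.dist_coe_eq_abs_sub hp h₂.le, h₂]
    rw [Fin.sum_univ_two]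
    calc ENNReal.ofReal (c * p) = ENNReal.ofReal (c * (p / 2)) + ENNReal.ofReal (c * (p / 2)) := by
          rw [← ENNReal.ofReal_add (by positivity) (by positivity), ← mul_add, add_halves]
      _ = _ := congrArg₂ (· + ·) hstep hstep'

end CurveLength

section Gluing

variable {X : Type*} [MetricSpace X] {l : ℝ} (γ : AddCircle l → X)

theorem quotDist_le_glueStep (x y : GluePts X l) : quotDist γ x y ≤ glueStep γ x y :=
  (iInf₂_le [x, y] ⟨rfl, rfl⟩).trans (by simp [chainCost])

variable {γ}

theorem ofReal_abs_sub_le_chainCost {u : GluePts X l → ℝ}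
    (hu : ∀ a b, ENNReal.ofReal |u a - u b| ≤ glueStep γ a b) :
    ∀ {c : List (GluePts X l)} {x y : GluePts X l}, c.head? = some x → c.getLast? = some y →
      ENNReal.ofReal |u x - u y| ≤ chainCost γ c
  | [], _, _, hx, _ => by simp at hx
  | [a], x, y, hx, hy => by
    obtain rfl : a = x := by simpa using hx
    obtain rfl : a = y := by simpa using hy
    simp
  | a :: b :: t, x, y, hx, hy => by
    obtain rfl : a = x := by simpa using hx
    calc ENNReal.ofReal |u a - u y|
        ≤ ENNReal.ofReal (|u a - u b| + |u b - u y|) := by gcongr; exact abs_sub_le _ _ _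
      _ = ENNReal.ofReal |u a - u b| + ENNReal.ofReal |u b - u y| :=
          ENNReal.ofReal_add (abs_nonneg _) (abs_nonneg _)
      _ ≤ glueStep γ a b + chainCost γ (b :: t) :=
          add_le_add (hu a b) (ofReal_abs_sub_le_chainCost hu rfl (by simpa using hy))

theorem ofReal_abs_sub_le_quotDist {u : GluePts X l → ℝ}
    (hu : ∀ a b, ENNReal.ofReal |u a - u b| ≤ glueStep γ a b) (x y : GluePts X l) :
    ENNReal.ofReal |u x - u y| ≤ quotDist γ x y :=
  le_iInf₂ fun _ hc => ofReal_abs_sub_le_chainCost hu hc.1 hc.2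

theorem dist_fst_le_cylDist (a b : AddCircle l × Set.Icc (0 : ℝ) l) :
    dist a.1 b.1 ≤ cylDist a b :=
  Real.le_sqrt_of_sq_le (le_add_of_nonneg_right (sq_nonneg _))

theorem dist_snd_le_cylDist (a b : AddCircle l × Set.Icc (0 : ℝ) l) :
    dist a.2 b.2 ≤ cylDist a b :=
  Real.le_sqrt_of_sq_le (le_add_of_nonneg_left (sq_nonneg _))

theorem cylDist_same_height (p q : AddCircle l) (t : Set.Icc (0 : ℝ) l) :
    cylDist (p, t) (q, t) = dist p q := by
  rw [cylDist, dist_self, zero_pow two_ne_zero, add_zero, Real.sqrt_sq dist_nonneg]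

variable (X) in
noncomputable def minHeightDist (q : AddCircle l) : GluePts X l → ℝ
  | Sum.inl _ => 0
  | Sum.inr a => min (a.2 : ℝ) (dist a.1 q)

theorem ofReal_abs_sub_minHeightDist_le_glueStep (q : AddCircle l) (a b : GluePts X l) :
    ENNReal.ofReal |minHeightDist X q a - minHeightDist X q b| ≤ glueStep γ a b := by
  match a, b with
  | Sum.inl x, Sum.inl y => simp [minHeightDist]
  | Sum.inl x, Sum.inr b =>
    by_cases h : x = γ b.1 ∧ (b.2 : ℝ) = 0
    · simp [glueStep, h, minHeightDist]
    · simp [glueStep, h]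
  | Sum.inr a, Sum.inl y =>
    by_cases h : y = γ a.1 ∧ (a.2 : ℝ) = 0
    · simp [glueStep, h, minHeightDist]
    · simp [glueStep, h]
  | Sum.inr a, Sum.inr b =>
    refine ENNReal.ofReal_le_ofReal ((abs_min_sub_min_le_max _ _ _ _).trans (max_le ?_ ?_))
    · rw [← Real.dist_eq, ← Subtype.dist_eq]
      exact dist_snd_le_cylDist a b
    · exact (abs_dist_sub_le _ _ _).trans (dist_fst_le_cylDist a b)

theorem quotDist_inr_eq_dist {p q : AddCircle l} {t : Set.Icc (0 : ℝ) l} (h : dist p q ≤ t) :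
    quotDist γ (Sum.inr (p, t)) (Sum.inr (q, t)) = ENNReal.ofReal (dist p q) := by
  refine le_antisymm ((quotDist_le_glueStep γ _ _).trans_eq ?_) ?_
  · rw [glueStep, eCylDist, cylDist_same_height]
  · simpa [minHeightDist, h, t.2.1] using
      ofReal_abs_sub_le_quotDist (ofReal_abs_sub_minHeightDist_le_glueStep (γ := γ) q)
        (Sum.inr (p, t)) (Sum.inr (q, t))

theorem quotDist_top_eq (hl : 0 < l) (p q : AddCircle l) :
    quotDist γ (Sum.inr (p, ⟨l, hl.le, le_rfl⟩)) (Sum.inr (q, ⟨l, hl.le, le_rfl⟩)) =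
      ENNReal.ofReal (dist p q) := by
  refine quotDist_inr_eq_dist ?_
  have := AddCircle.norm_le_half_period l (x := p - q) hl.ne'
  rw [abs_of_pos hl] at this
  rw [dist_eq_norm]
  change _ ≤ l
  linarith

end Gluing

theorem top_curve_jordan_chord_arc_general
    (X : Type*) [MetricSpace X] (l : ℝ) (hl : 0 < l)
    (γ : AddCircle l → X)
    (γl : ℝ → GluePts X l)
    (hγl : ∀ θ : ℝ, γl θ =
      Sum.inr (((θ * (l / (2 * Real.pi)) : ℝ) : AddCircle l), ⟨l, ⟨hl.le, le_rfl⟩⟩)) :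
    -- `γ_l` is injective on `S¹ = ℝ/2πℤ`, i.e. `Γ_l` is a Jordan curve
    (∀ s t : ℝ, quotDist γ (γl s) (γl t) = 0 →
        (s : AddCircle (2 * Real.pi)) = (t : AddCircle (2 * Real.pi))) ∧
    -- `Γ_l` has length `l`
    curveELength (quotDist γ) γl 0 (2 * Real.pi) = ENNReal.ofReal l ∧
    -- 1-chord-arc condition for the constant speed parametrization `γ_l`
    (∀ s t : ℝ,
        ENNReal.ofReal ((l / (2 * Real.pi)) *
          dist ((s : AddCircle (2 * Real.pi))) ((t : AddCircle (2 * Real.pi)))) ≤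
        quotDist γ (γl s) (γl t)) := by
  have hc : 0 < l / (2 * Real.pi) := by positivity
  have hdist (s t : ℝ) : quotDist γ (γl s) (γl t) = ENNReal.ofReal
      (l / (2 * Real.pi) * dist (s : AddCircle (2 * Real.pi)) (t : AddCircle (2 * Real.pi))) := by
    have h := AddCircle.dist_coe_mul (p := 2 * Real.pi) hc.le s t
    rw [mul_div_cancel₀ _ Real.two_pi_pos.ne'] at h
    rw [hγl, hγl, quotDist_top_eq hl, h]
  refine ⟨fun s t h => ?_, ?_, fun s t => (hdist s t).ge⟩
  · rw [hdist, ENNReal.ofReal_eq_zero] at h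
    exact dist_le_zero.1 (nonpos_of_mul_nonpos_right h hc)
  · rw [curveELength_eq_of_eq_dist_addCircle Real.two_pi_pos hc.le hdist,
      div_mul_cancel₀ _ Real.two_pi_pos.ne']

/-- The curve `Γ_l` in `X_Γ` corresponding to the top circle `S × {l}`
(in its constant speed parametrization `γ_l` over the unit circle `ℝ/2πℤ`) is a Jordan
curve of length `l` satisfying a 1-chord-arc condition:
`(l/2π)·d_{S¹}(p,q) ≤ d(γ_l(p), γ_l(q))` for all `p,q ∈ S¹`. -/
theorem top_curve_jordan_chord_arc
    (X : Type*) [MetricSpace X] [CompleteSpace X] (l : ℝ) (hl : 0 < l)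
    (γ : AddCircle l → X) (hγLip : LipschitzWith 1 γ) (hγspeed : IsUnitSpeed γ)
    (γl : ℝ → GluePts X l)
    (hγl : ∀ θ : ℝ, γl θ =
      Sum.inr (((θ * (l / (2 * Real.pi)) : ℝ) : AddCircle l), ⟨l, ⟨hl.le, le_rfl⟩⟩)) :
    -- `γ_l` is injective on `S¹ = ℝ/2πℤ`, i.e. `Γ_l` is a Jordan curve
    (∀ s t : ℝ, quotDist γ (γl s) (γl t) = 0 →
        (s : AddCircle (2 * Real.pi)) = (t : AddCircle (2 * Real.pi))) ∧
    -- `Γ_l` has length `l`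
    curveELength (quotDist γ) γl 0 (2 * Real.pi) = ENNReal.ofReal l ∧
    -- 1-chord-arc condition for the constant speed parametrization `γ_l`
    (∀ s t : ℝ,
        ENNReal.ofReal ((l / (2 * Real.pi)) *
          dist ((s : AddCircle (2 * Real.pi))) ((t : AddCircle (2 * Real.pi)))) ≤
        quotDist γ (γl s) (γl t)) :=
  top_curve_jordan_chord_arc_general X l hl γ γl hγl
end
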